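/- arXiv:1705.08667 — 2 statements merged into one kernel-verified Lean document; each statement's English description precedes it below -/
import Mathlib

section
/- If G is a triangle-free graph of order n and size m with no isolated vertex, then the packing number of G satisfies ρ(G) ≤ n + 2 − 2·sqrt(1 + m). -/
open SimpleGraph

def SimpleGraph.IsOpenPacking {V : Type*} (G : SimpleGraph V) (B : Finset V) : Prop :=
  ∀ v u w, u ∈ B → w ∈ B → G.Adj v u → G.Adj v w → u = w

def SimpleGraph.IsPacking {V : Type*} (G : SimpleGraph V) (B : Finset V) : Prop :=
  ∀ u ∈ B, ∀ w ∈ B, u ≠ w →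
    Disjoint (insert u (G.neighborSet u)) (insert w (G.neighborSet w))

noncomputable def SimpleGraph.openPackingNumber {V : Type*} [Fintype V] (G : SimpleGraph V) : ℕ :=
  sSup {k | ∃ B : Finset V, G.IsOpenPacking B ∧ B.card = k}

noncomputable def SimpleGraph.packingNumber {V : Type*} [Fintype V] (G : SimpleGraph V) : ℕ :=
  sSup {k | ∃ B : Finset V, G.IsPacking B ∧ B.card = k}

/-!
Take a maximum packing `B` with `k` vertices. The closed neighbourhoods of its vertices are
pairwise disjoint, so `k + s ≤ n`, where `s` is the degree sum over `B`. At most `s` edges meet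
`B`, and by Mantel's theorem the triangle-free graph induced on the other `n - k` vertices has at
most `(n - k)² / 4` edges. Hence `1 + m ≤ 1 + (n - k) + (n - k)² / 4 = ((n - k + 2) / 2)²`, which
is the claim after taking square roots.
-/

open Finset

namespace SimpleGraph

variable {V : Type*} [Fintype V] {G : SimpleGraph V}

variable (G) in
theorem exists_isPacking_card_eq_packingNumber :
    ∃ B : Finset V, G.IsPacking B ∧ #B = G.packingNumber := by
  refine Nat.sSup_mem (s := {k | ∃ B : Finset V, G.IsPacking B ∧ #B = k})
    ⟨0, ∅, by simp [IsPacking], rfl⟩ ⟨Fintype.card V, ?_⟩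
  rintro k ⟨B, -, rfl⟩
  exact card_le_univ B

variable [DecidableRel G.Adj]

theorem CliqueFree.four_mul_card_edgeFinset_le (h : G.CliqueFree 3) :
    4 * #G.edgeFinset ≤ Fintype.card V ^ 2 := by
  -- Turán's bound for `r = 2` reads `(n² - (n % 2)²) / 4`.
  have hle := CliqueFree.card_edgeFinset_le (r := 2) h
  simp only [Nat.choose_eq_zero_of_lt (Nat.mod_lt _ two_pos), add_zero] at hle
  rcases Nat.mod_two_eq_zero_or_one (Fintype.card V) with h2 | h2 <;> rw [h2] at hle <;> omega

theorem card_edgeFinset_le_sum_degree_add_card_edgeFinset_induce [DecidableEq V] (s : Finset V) :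
    #G.edgeFinset ≤ ∑ v ∈ s, G.degree v + #(G.induce ((sᶜ : Finset V) : Set V)).edgeFinset := by
  rw [← card_filter_edgeFinset_toFinset_subset, ← card_filter_add_card_filter_not
    (s := G.edgeFinset) (fun e : Sym2 V => ¬ e.toFinset ⊆ sᶜ)]
  simp only [not_not]
  gcongr
  calc #{e ∈ G.edgeFinset | ¬e.toFinset ⊆ sᶜ}
      ≤ #(s.biUnion fun v => G.incidenceFinset v) := by
        refine card_le_card fun e he => ?_
        obtain ⟨he, hs⟩ := mem_filter.mp he
        obtain ⟨v, hv, hvs⟩ := not_subset.mp hs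
        simp only [Sym2.mem_toFinset, mem_compl, not_not] at hv hvs
        exact mem_biUnion.mpr ⟨v, hvs, (mem_incidenceFinset _ _ _).mpr ⟨mem_edgeFinset.mp he, hv⟩⟩
    _ ≤ ∑ v ∈ s, #(G.incidenceFinset v) := card_biUnion_le
    _ = ∑ v ∈ s, G.degree v := by simp only [card_incidenceFinset_eq_degree]

theorem IsPacking.card_add_sum_degree_le [DecidableEq V] {B : Finset V} (hB : G.IsPacking B) :
    #B + ∑ v ∈ B, G.degree v ≤ Fintype.card V := by
  have hdisj : (B : Set V).PairwiseDisjoint fun v => insert v (G.neighborFinset v) := by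
    intro u hu w hw huw
    rw [Function.onFun, ← disjoint_coe]
    simpa [neighborFinset_def] using hB u hu w hw huw
  calc #B + ∑ v ∈ B, G.degree v = ∑ v ∈ B, #(insert v (G.neighborFinset v)) := by
        simp [sum_add_distrib, card_insert_of_notMem, add_comm]
    _ = #(B.biUnion fun v => insert v (G.neighborFinset v)) := (card_biUnion hdisj).symm
    _ ≤ Fintype.card V := card_le_univ _

theorem IsPacking.four_mul_one_add_card_edgeFinset_le [DecidableEq V] (h : G.CliqueFree 3)
    {B : Finset V} (hB : G.IsPacking B) :
    4 * (1 + #G.edgeFinset) ≤ (Fintype.card V - #B + 2) ^ 2 := by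
  have hsum := hB.card_add_sum_degree_le
  have hsplit := G.card_edgeFinset_le_sum_degree_add_card_edgeFinset_induce B
  have hmantel :=
    (h.comap (Embedding.induce ((Bᶜ : Finset V) : Set V)).isContained).four_mul_card_edgeFinset_le
  simp only [coe_sort_coe, Fintype.card_coe, card_compl] at hmantel
  have hdeg : ∑ v ∈ B, G.degree v ≤ Fintype.card V - #B := by omega
  generalize Fintype.card V - #B = x at hdeg hmantel ⊢
  rw [show (x + 2) ^ 2 = x ^ 2 + 4 * x + 4 by ring]
  omega

end SimpleGraph

theorem stmt_2_general {V : Type*} [Fintype V] (G : SimpleGraph V) [DecidableRel G.Adj]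
    (h : G.CliqueFree 3) :
    (G.packingNumber : ℝ) ≤ Fintype.card V + 2 -
      2 * Real.sqrt (1 + G.edgeFinset.card) := by
  classical
  obtain ⟨B, hB, hcard⟩ := G.exists_isPacking_card_eq_packingNumber
  have hbound : (4 * (1 + #G.edgeFinset) : ℝ) ≤ (Fintype.card V - #B + 2) ^ 2 := by
    have := hB.four_mul_one_add_card_edgeFinset_le h
    rw [← Nat.cast_sub (card_le_univ B)]
    exact_mod_cast this
  have hBn : (#B : ℝ) ≤ Fintype.card V := by exact_mod_cast card_le_univ B
  have hsqrt := Real.sq_sqrt (show (0 : ℝ) ≤ 1 + #G.edgeFinset by positivity)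
  rw [← hcard]
  nlinarith [Real.sqrt_nonneg (1 + #G.edgeFinset : ℝ)]

theorem stmt_2 {V : Type*} [Fintype V] (G : SimpleGraph V) [DecidableRel G.Adj]
    (h : G.CliqueFree 3) (hiso : ∀ v, 0 < G.degree v) :
    (G.packingNumber : ℝ) ≤ Fintype.card V + 2 -
      2 * Real.sqrt (1 + G.edgeFinset.card) :=
  stmt_2_general G h
end

section
/- For any connected graph G of order n, the open packing number satisfies ρ_o(G) ≤ n − Δ(G) + 1, with equality if and only if Δ(G) = n − 1 and δ(G) = 1. -/
/-!
Removing the neighbourhood of a vertex `v` of maximum degree leaves `n - Δ` vertices, and an open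
packing meets `N(v)` in at most one vertex, whence `ρ_o ≤ n - Δ + 1`. A packing `B` attaining the
bound contains `v`, every non-neighbour of `v`, and one neighbour `u` of `v`. A non-neighbour of `v`
adjacent to `N(v)` would share a neighbour with `v`, so by connectivity `v` is universal; then
every further neighbour of `u` would be a common neighbour of `u` and `v`, so `deg u = 1`.
Conversely, a leaf together with its neighbour is an open packing of size `2 = n - (n - 1) + 1`.
-/

open SimpleGraph Finset

namespace SimpleGraph

variable {V : Type*} {G : SimpleGraph V} {B : Finset V} {u v w : V}

lemma IsOpenPacking.isUniversal (hc : G.Preconnected) (hB : G.IsOpenPacking B)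
    (hsub : ∀ x, ¬G.Adj v x → x ∈ B) : G.IsUniversal v := by
  intro w hvw
  by_contra hw
  obtain ⟨p⟩ := hc v w
  obtain ⟨d, -, hfst, hsnd⟩ := p.exists_boundary_dart {x | x = v ∨ G.Adj v x} (Or.inl rfl)
    (by rintro (rfl | h) <;> tauto)
  simp only [Set.mem_ofPred_eq, not_or] at hfst hsnd
  have hfst_adj : G.Adj v d.fst := hfst.resolve_left fun h => hsnd.2 (h ▸ d.adj)
  exact hsnd.1 (hB d.fst d.snd v (hsub _ hsnd.2) (hsub v G.irrefl) d.adj hfst_adj.symm)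

section OpenPackingNumber

variable [Fintype V]

lemma openPackingNumber_bddAbove :
    BddAbove {k | ∃ B : Finset V, G.IsOpenPacking B ∧ #B = k} :=
  ⟨Fintype.card V, fun _ ⟨B, _, hB⟩ => hB ▸ B.card_le_univ⟩

lemma IsOpenPacking.card_le_openPackingNumber (hB : G.IsOpenPacking B) :
    #B ≤ G.openPackingNumber :=
  le_csSup openPackingNumber_bddAbove ⟨B, hB, rfl⟩

lemma exists_isOpenPacking_card_eq_openPackingNumber :
    ∃ B : Finset V, G.IsOpenPacking B ∧ #B = G.openPackingNumber :=
  Nat.sSup_mem (s := {k | ∃ B : Finset V, G.IsOpenPacking B ∧ #B = k})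
    ⟨0, ∅, fun _ _ _ hu => absurd hu (notMem_empty _), rfl⟩ openPackingNumber_bddAbove

end OpenPackingNumber

section Degree

variable [DecidableRel G.Adj]

lemma IsOpenPacking.card_filter_adj_le_one (hB : G.IsOpenPacking B) (v : V) :
    #{x ∈ B | G.Adj v x} ≤ 1 :=
  card_le_one.2 fun x hx y hy => by
    simp only [mem_filter] at hx hy
    exact hB v x y hx.1 hy.1 hx.2 hy.2

variable [Fintype V]

lemma card_filter_not_adj (v : V) :
    #{x | ¬G.Adj v x} = Fintype.card V - G.degree v := by
  have := card_filter_add_card_filter_not (s := univ) (fun x => G.Adj v x)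
  rw [card_univ] at this
  rw [← card_neighborFinset_eq_degree, neighborFinset_eq_filter]
  omega

lemma card_filter_not_adj_le (B : Finset V) (v : V) :
    #{x ∈ B | ¬G.Adj v x} ≤ Fintype.card V - G.degree v :=
  (card_le_card (filter_subset_filter _ (subset_univ B))).trans_eq (card_filter_not_adj v)

lemma IsOpenPacking.card_le (hB : G.IsOpenPacking B) (v : V) :
    #B ≤ Fintype.card V - G.degree v + 1 := by
  have := card_filter_not_adj_le (G := G) B v
  have := hB.card_filter_adj_le_one v
  have := card_filter_add_card_filter_not (s := B) (fun x => G.Adj v x)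
  omega

lemma IsOpenPacking.forall_not_adj_mem_and_exists_adj_mem (hB : G.IsOpenPacking B)
    (hcard : #B = Fintype.card V - G.degree v + 1) :
    (∀ x, ¬G.Adj v x → x ∈ B) ∧ ∃ u ∈ B, G.Adj v u := by
  have := card_filter_not_adj_le (G := G) B v
  have := hB.card_filter_adj_le_one v
  have := card_filter_add_card_filter_not (s := B) (fun x => G.Adj v x)
  constructor
  · have hnonadj : ({x ∈ B | ¬G.Adj v x} : Finset V) = ({x | ¬G.Adj v x} : Finset V) :=
      eq_of_subset_of_card_le (filter_subset_filter _ (subset_univ B))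
        (by rw [card_filter_not_adj]; omega)
    intro x hx
    have hx' : x ∈ ({x ∈ B | ¬G.Adj v x} : Finset V) := hnonadj ▸ mem_filter.2 ⟨mem_univ x, hx⟩
    exact (mem_filter.1 hx').1
  · obtain ⟨u, hu⟩ := card_pos.1 (show 0 < #{x ∈ B | G.Adj v x} by omega)
    exact ⟨u, (mem_filter.1 hu).1, (mem_filter.1 hu).2⟩

lemma IsOpenPacking.degree_eq_one (hB : G.IsOpenPacking B) (hv : G.IsUniversal v)
    (hvB : v ∈ B) (huB : u ∈ B) (huv : G.Adj u v) : G.degree u = 1 :=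
  degree_eq_one_iff_existsUnique_adj.2 ⟨v, huv, fun x hux => by
    by_contra hxv
    exact huv.ne (hB x u v huB hvB hux.symm (hv (Ne.symm hxv)).symm)⟩

lemma isOpenPacking_pair_of_degree_eq_one [DecidableEq V] (hu : G.degree u = 1)
    (huw : G.Adj u w) : G.IsOpenPacking {u, w} := by
  obtain ⟨w', -, huniq⟩ := degree_eq_one_iff_existsUnique_adj.1 hu
  have hnot : ∀ x, G.Adj x u → ¬G.Adj x w := fun x hxu hxw => by
    obtain rfl : x = w := (huniq x hxu.symm).trans (huniq w huw).symm
    exact G.irrefl hxw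
  intro x a b ha hb hxa hxb
  simp only [mem_insert, mem_singleton] at ha hb
  rcases ha with rfl | rfl <;> rcases hb with rfl | rfl
  all_goals first | rfl | exact absurd hxb (hnot x hxa) | exact absurd hxa (hnot x hxb)

end Degree

end SimpleGraph

theorem stmt_16 {V : Type*} [Fintype V] (G : SimpleGraph V) [DecidableRel G.Adj]
    (hc : G.Connected) (hn : 2 ≤ Fintype.card V) :
    G.openPackingNumber ≤ Fintype.card V - G.maxDegree + 1 ∧
      (G.openPackingNumber = Fintype.card V - G.maxDegree + 1 ↔
        G.maxDegree = Fintype.card V - 1 ∧ G.minDegree = 1) := by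
  classical
  have : Nontrivial V := Fintype.one_lt_card_iff_nontrivial.1 hn
  obtain ⟨v, hv⟩ := G.exists_maximal_degree_vertex
  obtain ⟨B, hB, hBcard⟩ := G.exists_isOpenPacking_card_eq_openPackingNumber
  have hδ_pos := hc.preconnected.minDegree_pos_of_nontrivial
  have hub : G.openPackingNumber ≤ Fintype.card V - G.maxDegree + 1 :=
    hv ▸ hBcard ▸ hB.card_le v
  refine ⟨hub, fun heq => ?_, fun ⟨hΔ, hδ⟩ => ?_⟩
  · obtain ⟨hsub, u, huB, hvu⟩ :=
      hB.forall_not_adj_mem_and_exists_adj_mem (hBcard.trans (hv ▸ heq))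
    have huniv := hB.isUniversal hc.preconnected hsub
    have hu := hB.degree_eq_one huniv (hsub v G.irrefl) huB hvu.symm
    exact ⟨hv ▸ (G.degree_eq_card_sub_one v).2 huniv,
      le_antisymm (hu ▸ G.minDegree_le_degree u) hδ_pos⟩
  · obtain ⟨u, hu⟩ := G.exists_minimal_degree_vertex
    obtain ⟨w, huw, -⟩ := degree_eq_one_iff_existsUnique_adj.1 (hu ▸ hδ)
    have htwo := (isOpenPacking_pair_of_degree_eq_one (hu ▸ hδ) huw).card_le_openPackingNumber
    rw [card_pair huw.ne] at htwo
    omega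
end
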